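/- The integration scheme m_{n+1} = F(m_n) given by formula (26) is exact for constant field: if m solves m' = -H[(m × h) + g m × (m × h)] on [t, t+Δt] with H, h constant, ‖h‖ = 1, ‖m(t)‖ = 1, and ⟪m(t), h⟫ > -1, then m(t+Δt) equals the scheme's update applied to m(t). In particular the scheme has zero local truncation error for piecewise-constant fields. -/

import Mathlib

open RealInnerProductSpace

noncomputable def cross3 (a b : EuclideanSpace ℝ (Fin 3)) : EuclideanSpace ℝ (Fin 3) :=
  (WithLp.equiv 2 (Fin 3 → ℝ)).symm
    (crossProduct ((WithLp.equiv 2 (Fin 3 → ℝ)) a) ((WithLp.equiv 2 (Fin 3 → ℝ)) b))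

/-! In the frame `h`, `p = h × (x × h)`, `q = h × p` (mutually orthogonal, `‖q‖ = ‖p‖`) the field
at `a h + b p + e q` has coordinates `(gH (b² + e²) ‖p‖², -He - gHab, Hb - gHae)`, so the equation
becomes a scalar system. The update formula solves it: with `c = ⟪x, h⟫` and
`D = cosh (gHτ) + c sinh (gHτ)` (positive since `|c| ≤ 1`), the polar part
`a = (c cosh (gHτ) + sinh (gHτ)) / D` solves the Riccati equation `a' = gH (1 - a²)`, and `(b, e)`
rotates at rate `H` with amplitude `1 / D`. The field is polynomial, hence locally Lipschitz, so the
solution through `m t` is unique. -/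

open Real Set

local notation "𝔼" => EuclideanSpace ℝ (Fin 3)

section Cross3

variable (a b c : 𝔼)

lemma cross3_apply :
    cross3 a b = ![a 1 * b 2 - a 2 * b 1, a 2 * b 0 - a 0 * b 2, a 0 * b 1 - a 1 * b 0] := by
  simp [cross3, crossProduct]

lemma cross3_anticomm : cross3 a b = -cross3 b a := by
  ext i; fin_cases i <;> simp [cross3_apply] <;> ring

lemma cross3_self : cross3 a a = 0 := by
  ext i; fin_cases i <;> simp [cross3_apply] <;> ring

lemma cross3_add_right : cross3 a (b + c) = cross3 a b + cross3 a c := by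
  ext i; fin_cases i <;> simp [cross3_apply] <;> ring

lemma cross3_smul_right (r : ℝ) : cross3 a (r • b) = r • cross3 a b := by
  ext i; fin_cases i <;> simp [cross3_apply] <;> ring

lemma cross3_cross3 : cross3 a (cross3 b c) = ⟪a, c⟫ • b - ⟪a, b⟫ • c := by
  ext i; fin_cases i <;> simp [cross3_apply, PiLp.inner_apply, Fin.sum_univ_three] <;> ring

lemma inner_self_cross3 : ⟪a, cross3 a b⟫ = 0 := by
  simp [cross3_apply, PiLp.inner_apply, Fin.sum_univ_three]; ring

lemma inner_cross3_self : ⟪b, cross3 a b⟫ = 0 := by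
  simp [cross3_apply, PiLp.inner_apply, Fin.sum_univ_three]; ring

lemma inner_cross3_cross3_self :
    ⟪cross3 a b, cross3 a b⟫ = ⟪a, a⟫ * ⟪b, b⟫ - ⟪a, b⟫ ^ 2 := by
  simp only [PiLp.inner_apply, Fin.sum_univ_three]
  simp [cross3_apply]; ring

lemma contDiff_cross3 {n : WithTop ℕ∞} : ContDiff ℝ n (fun x : 𝔼 × 𝔼 => cross3 x.1 x.2) := by
  rw [contDiff_piLp]
  intro i
  fin_cases i <;> simp [cross3_apply] <;> fun_prop

end Cross3

theorem ODE_solution_unique_of_contDiff {E : Type*} [NormedAddCommGroup E] [NormedSpace ℝ E]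
    {v : E → E} (hv : ContDiff ℝ 1 v) {f g : ℝ → E} {a b : ℝ}
    (hf : ContinuousOn f (Icc a b)) (hf' : ∀ t ∈ Ico a b, HasDerivWithinAt f (v (f t)) (Ici t) t)
    (hg : ContinuousOn g (Icc a b)) (hg' : ∀ t ∈ Ico a b, HasDerivWithinAt g (v (g t)) (Ici t) t)
    (ha : f a = g a) :
    EqOn f g (Icc a b) := by
  obtain ⟨K, hK⟩ : ∃ K, LipschitzOnWith K v (f '' Icc a b ∪ g '' Icc a b) :=
    LocallyLipschitzOn.exists_lipschitzOnWith_of_compact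
      ((isCompact_Icc.image_of_continuousOn hf).union (isCompact_Icc.image_of_continuousOn hg))
      hv.locallyLipschitz.locallyLipschitzOn
  exact ODE_solution_unique_of_mem_Icc_right (v := fun _ => v) (fun _ _ => hK) hf hf'
    (fun t ht => .inl ⟨t, Ico_subset_Icc_self ht, rfl⟩) hg hg'
    (fun t ht => .inr ⟨t, Ico_subset_Icc_self ht, rfl⟩) ha

noncomputable def llgField (g H : ℝ) (h x : 𝔼) : 𝔼 :=
  (-H) • (cross3 x h + g • cross3 x (cross3 x h))

lemma contDiff_llgField {n : WithTop ℕ∞} (g H : ℝ) (h : 𝔼) : ContDiff ℝ n (llgField g H h) := by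
  have hcross : ∀ {u v : 𝔼 → 𝔼}, ContDiff ℝ n u → ContDiff ℝ n v →
      ContDiff ℝ n (fun x => cross3 (u x) (v x)) :=
    fun hu hv => contDiff_cross3.comp (hu.prodMk hv)
  have hxh : ContDiff ℝ n (fun x : 𝔼 => cross3 x h) := hcross contDiff_id contDiff_const
  exact (hxh.add ((hcross contDiff_id hxh).const_smul g)).const_smul (-H)

lemma llgField_frame (g H a b e : ℝ) {h p : 𝔼} (hh : ⟪h, h⟫ = 1) (hp : ⟪h, p⟫ = 0) :
    llgField g H h (a • h + b • p + e • cross3 h p) =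
      (g * H * (b ^ 2 + e ^ 2) * ⟪p, p⟫) • h + (-H * e - g * H * a * b) • p +
        (H * b - g * H * a * e) • cross3 h p := by
  set q := cross3 h p
  set x := a • h + b • p + e • q
  have hh_cross_q : cross3 h q = -p := by rw [cross3_cross3, hp, hh]; simp
  have hx_cross_h : cross3 x h = e • p - b • q := by
    rw [cross3_anticomm, cross3_add_right, cross3_add_right, cross3_smul_right,
      cross3_smul_right, cross3_smul_right, cross3_self, hh_cross_q]
    module
  have hq_q : ⟪q, q⟫ = ⟪p, p⟫ := by rw [inner_cross3_cross3_self, hh, hp]; ring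
  have hp_h : ⟪p, h⟫ = 0 := by rw [real_inner_comm, hp]
  have hq_h : ⟪q, h⟫ = 0 := by rw [real_inner_comm, inner_self_cross3]
  have hq_p : ⟪q, p⟫ = 0 := by rw [real_inner_comm, inner_cross3_self]
  have hp_q : ⟪p, q⟫ = 0 := inner_cross3_self h p
  have hh_q : ⟪h, q⟫ = 0 := inner_self_cross3 h p
  have hx_h : ⟪x, h⟫ = a := by
    simp only [x, inner_add_left, real_inner_smul_left, hh, hp_h, hq_h]
    ring
  have hx_x : ⟪x, x⟫ = a ^ 2 + (b ^ 2 + e ^ 2) * ⟪p, p⟫ := by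
    simp only [x, inner_add_left, inner_add_right, real_inner_smul_left, real_inner_smul_right,
      hh, hp, hp_h, hq_h, hq_p, hp_q, hh_q, hq_q]
    ring
  rw [llgField, cross3_cross3, hx_cross_h, hx_h, hx_x]
  match_scalars <;> ring

lemma cosh_add_mul_sinh_pos {c : ℝ} (hc : |c| ≤ 1) (u : ℝ) : 0 < cosh u + c * sinh u := by
  rw [abs_le] at hc
  rcases le_total 0 (sinh u) with hs | hs
  · nlinarith [cosh_sub_sinh u, exp_pos (-u)]
  · nlinarith [cosh_add_sinh u, exp_pos u]

noncomputable def llgFlow (g H : ℝ) (h x : 𝔼) (τ : ℝ) : 𝔼 :=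
  ((⟪x, h⟫ * cosh (g * H * τ) + sinh (g * H * τ)) /
      (cosh (g * H * τ) + ⟪x, h⟫ * sinh (g * H * τ))) • h +
    (1 / (cosh (g * H * τ) + ⟪x, h⟫ * sinh (g * H * τ))) •
      (cos (H * τ) • cross3 h (cross3 x h) + sin (H * τ) • cross3 h (cross3 h (cross3 x h)))

lemma hasDerivAt_frame_curve (g H : ℝ) {h p : 𝔼} (hh : ⟪h, h⟫ = 1) (hp : ⟪h, p⟫ = 0)
    {a b e : ℝ → ℝ} {τ : ℝ}
    (ha : HasDerivAt a (g * H * (b τ ^ 2 + e τ ^ 2) * ⟪p, p⟫) τ)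
    (hb : HasDerivAt b (-H * e τ - g * H * a τ * b τ) τ)
    (he : HasDerivAt e (H * b τ - g * H * a τ * e τ) τ) :
    HasDerivAt (fun τ => a τ • h + b τ • p + e τ • cross3 h p)
      (llgField g H h (a τ • h + b τ • p + e τ • cross3 h p)) τ := by
  rw [llgField_frame g H _ _ _ hh hp]
  exact ((ha.smul_const h).add (hb.smul_const p)).add (he.smul_const _)

lemma llgFlow_zero (g H : ℝ) {h : 𝔼} (hh : ‖h‖ = 1) (x : 𝔼) : llgFlow g H h x 0 = x := by
  simp [llgFlow, cross3_cross3, hh, real_inner_comm h x]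

lemma hasDerivAt_llgFlow (g H : ℝ) {h x : 𝔼} (hh : ‖h‖ = 1) (hx : ‖x‖ = 1) (τ : ℝ) :
    HasDerivAt (llgFlow g H h x) (llgField g H h (llgFlow g H h x τ)) τ := by
  have hhh : ⟪h, h⟫ = 1 := by rw [real_inner_self_eq_norm_sq, hh, one_pow]
  have hxx : ⟪x, x⟫ = 1 := by rw [real_inner_self_eq_norm_sq, hx, one_pow]
  set c := ⟪x, h⟫
  set p := cross3 h (cross3 x h)
  have hhp : ⟪h, p⟫ = 0 := inner_self_cross3 _ _
  have hpp : ⟪p, p⟫ = 1 - c ^ 2 := by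
    rw [inner_cross3_cross3_self, inner_cross3_cross3_self, inner_cross3_self, hhh, hxx]; ring
  have hc : |c| ≤ 1 := by simpa [hx, hh] using abs_real_inner_le_norm x h
  set D := fun τ => cosh (g * H * τ) + c * sinh (g * H * τ)
  have hD : D τ ≠ 0 := (cosh_add_mul_sinh_pos hc _).ne'
  have hflow : llgFlow g H h x = fun τ =>
      ((c * cosh (g * H * τ) + sinh (g * H * τ)) / D τ) • h + (cos (H * τ) / D τ) • p +
        (sin (H * τ) / D τ) • cross3 h p := by
    funext τ
    simp only [llgFlow, smul_add, smul_smul, D]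
    match_scalars <;> ring
  have hu : HasDerivAt (fun τ => g * H * τ) (g * H) τ := by
    simpa using (hasDerivAt_id τ).const_mul (g * H)
  have hv : HasDerivAt (fun τ => H * τ) H τ := by simpa using (hasDerivAt_id τ).const_mul H
  have hDd : HasDerivAt D (sinh (g * H * τ) * (g * H) + c * (cosh (g * H * τ) * (g * H))) τ :=
    hu.cosh.add (hu.sinh.const_mul c)
  rw [hflow]
  refine hasDerivAt_frame_curve g H hhh hhp ?_ ?_ ?_
  · refine (((hu.cosh.const_mul c).fun_add hu.sinh).div hDd hD).congr_deriv ?_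
    rw [hpp]
    field_simp
    linear_combination (g * H * (c ^ 2 - 1)) * cos_sq_add_sin_sq (H * τ)
      + (g * H * (1 - c ^ 2)) * cosh_sq_sub_sinh_sq (g * H * τ)
  · refine (hv.cos.div hDd hD).congr_deriv ?_
    field_simp
    ring
  · refine (hv.sin.div hDd hD).congr_deriv ?_
    field_simp
    ring

theorem scheme_exact_for_constant_field_general (g H Δt t : ℝ) (hΔt : 0 ≤ Δt)
    (h : EuclideanSpace ℝ (Fin 3)) (hh : ‖h‖ = 1)
    (m : ℝ → EuclideanSpace ℝ (Fin 3)) (hm : Differentiable ℝ m)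
    (heq : ∀ s ∈ Set.Icc t (t + Δt), deriv m s =
      (-H) • (cross3 (m s) h + g • cross3 (m s) (cross3 (m s) h)))
    (hnorm : ‖m t‖ = 1) :
    m (t + Δt) =
      ((⟪m t, h⟫ * Real.cosh (g * H * Δt) + Real.sinh (g * H * Δt)) /
        (Real.cosh (g * H * Δt) + ⟪m t, h⟫ * Real.sinh (g * H * Δt))) • h +
      (1 / (Real.cosh (g * H * Δt) + ⟪m t, h⟫ * Real.sinh (g * H * Δt))) •
        ((Real.cos (H * Δt)) • cross3 h (cross3 (m t) h) +
         (Real.sin (H * Δt)) • cross3 h (cross3 h (cross3 (m t) h))) := by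
  have hflow : ∀ s, HasDerivAt (fun s => llgFlow g H h (m t) (s - t))
      (llgField g H h (llgFlow g H h (m t) (s - t))) s :=
    fun s => (hasDerivAt_llgFlow g H hh hnorm (s - t)).comp_sub_const s t
  have hm' : ∀ s ∈ Ico t (t + Δt), HasDerivWithinAt m (llgField g H h (m s)) (Ici s) s := by
    intro s hs
    rw [llgField, ← heq s (Ico_subset_Icc_self hs)]
    exact (hm s).hasDerivAt.hasDerivWithinAt
  have hunique := ODE_solution_unique_of_contDiff (contDiff_llgField g H h) hm.continuous.continuousOn
    hm' (HasDerivAt.continuousOn fun s _ => hflow s) (fun s _ => (hflow s).hasDerivWithinAt)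
    (by rw [sub_self, llgFlow_zero g H hh])
  rw [hunique ⟨le_add_of_nonneg_right hΔt, le_rfl⟩]
  exact congrArg (llgFlow g H h (m t)) (add_sub_cancel_left t Δt)

theorem scheme_exact_for_constant_field (g H Δt t : ℝ) (hΔt : 0 ≤ Δt)
    (h : EuclideanSpace ℝ (Fin 3)) (hh : ‖h‖ = 1)
    (m : ℝ → EuclideanSpace ℝ (Fin 3)) (hm : Differentiable ℝ m)
    (hm' : Continuous (deriv m))
    (heq : ∀ s ∈ Set.Icc t (t + Δt), deriv m s =
      (-H) • (cross3 (m s) h + g • cross3 (m s) (cross3 (m s) h)))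
    (hnorm : ‖m t‖ = 1) (hmh : -1 < ⟪m t, h⟫) :
    m (t + Δt) =
      ((⟪m t, h⟫ * Real.cosh (g * H * Δt) + Real.sinh (g * H * Δt)) /
        (Real.cosh (g * H * Δt) + ⟪m t, h⟫ * Real.sinh (g * H * Δt))) • h +
      (1 / (Real.cosh (g * H * Δt) + ⟪m t, h⟫ * Real.sinh (g * H * Δt))) •
        ((Real.cos (H * Δt)) • cross3 h (cross3 (m t) h) +
         (Real.sin (H * Δt)) • cross3 h (cross3 h (cross3 (m t) h))) :=
  scheme_exact_for_constant_field_general g H Δt t hΔt h hh m hm heq hnorm
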